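/- arXiv:1611.04226 — 5 statements merged into one kernel-verified Lean document; each statement's English description precedes it below -/
import Mathlib

section
/- Let R be a finite principal ideal ring and let a, b ∈ R. Then the annihilator ideal of a is contained in the annihilator ideal of b if and only if a divides b. -/
/-!
In a finite commutative ring `|R| = |ann x| * |(x)|`. If `ann a = (c)`, then `(a) ≤ ann c` and both
have `|R| / |(c)|` elements, so `ann c = (a)`. Now `c ∈ ann a ≤ ann b` gives `b ∈ ann c = (a)`.
-/

open Submodule LinearMap

section

variable {R : Type*} [CommRing R]

theorem Submodule.card_eq_card_annihilator_mul_card_span_singleton {M : Type*} [AddCommGroup M]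
    [Module R M] (x : M) :
    Nat.card R = Nat.card (R ∙ x).annihilator * Nat.card (R ∙ x) := by
  rw [(R ∙ x).annihilator.card_eq_card_quotient_mul_card, annihilator_span_singleton,
    Nat.card_congr (toSpanSingleton R M x).quotKerEquivRange.toEquiv, range_toSpanSingleton]

theorem Ideal.mem_annihilator_span_singleton_comm {a b : R} :
    a ∈ (Ideal.span {b}).annihilator ↔ b ∈ (Ideal.span {a}).annihilator := by
  rw [mem_annihilator_span_singleton, mem_annihilator_span_singleton, smul_eq_mul, smul_eq_mul,
    mul_comm]

theorem Ideal.annihilator_span_singleton_eq_of_eq [Finite R] {a c : R}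
    (h : (Ideal.span {a}).annihilator = Ideal.span {c}) :
    (Ideal.span {c}).annihilator = Ideal.span {a} := by
  have hle : Ideal.span {a} ≤ (Ideal.span {c}).annihilator := by
    rw [Ideal.span_singleton_le_iff_mem, mem_annihilator_span_singleton_comm, h]
    exact Ideal.mem_span_singleton_self c
  have hcard : Nat.card (Ideal.span {c}).annihilator = Nat.card (Ideal.span {a}) := by
    have hc := card_eq_card_annihilator_mul_card_span_singleton (R := R) c
    rw [card_eq_card_annihilator_mul_card_span_singleton a, h, mul_comm] at hc
    exact (Nat.eq_of_mul_eq_mul_right Nat.card_pos hc).symm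
  exact (SetLike.coe_injective <|
    Set.Finite.eq_of_subset_of_card_le (Set.toFinite _) hle hcard.le).symm

theorem Ideal.annihilator_span_singleton_le_iff_dvd [Finite R] [IsPrincipalIdealRing R]
    {a b : R} : (Ideal.span {a}).annihilator ≤ (Ideal.span {b}).annihilator ↔ a ∣ b := by
  refine ⟨fun h => ?_, fun hab => ?_⟩
  · obtain ⟨c, hc⟩ : ∃ c, (Ideal.span {a}).annihilator = Ideal.span {c} :=
      ⟨_, (Ideal.span_singleton_generator _).symm⟩
    have hbc : b ∈ (Ideal.span {c}).annihilator := by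
      rw [mem_annihilator_span_singleton_comm]
      exact h (hc ▸ Ideal.mem_span_singleton_self c)
    rwa [annihilator_span_singleton_eq_of_eq hc, Ideal.mem_span_singleton] at hbc
  · exact annihilator_mono (Ideal.span_singleton_le_span_singleton.mpr hab)

end

/-- Let `R` be a finite (commutative) principal ideal ring and `a b : R`.
Then the annihilator of `a` is contained in the annihilator of `b` iff `a` divides `b`. -/
theorem ann_subset_ann_iff_dvd (R : Type*) [CommRing R] [Finite R]
    [IsPrincipalIdealRing R] (a b : R) :
    {r : R | a * r = 0} ⊆ {r : R | b * r = 0} ↔ a ∣ b := by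
  simpa only [Set.ofPred_subset_ofPred, SetLike.le_def, mem_annihilator_span_singleton,
    smul_eq_mul, mul_comm _ a, mul_comm _ b] using Ideal.annihilator_span_singleton_le_iff_dvd (a := a) (b := b)
end

section
/- Let R be a commutative ring and let M, N be R-submodules of an R-module Ω, all of finite length. Then the function d(M,N) = λ(M) + λ(N) − 2λ(M ∩ N) is a metric on the set of R-submodules of Ω; in particular it satisfies the triangle inequality d(M,N) ≤ d(M,P) + d(P,N) for all submodules M, N, P of Ω. -/
/-- The length of a submodule `M` of `Ω`: the supremum of lengths of strictly
increasing chains of submodules of `M` (as a natural number). -/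
noncomputable def submodLength {R : Type*} [Ring R] {Ω : Type*} [AddCommGroup Ω]
    [Module R Ω] (M : Submodule R Ω) : ℕ :=
  (WithBot.unbotD 0 (Order.krullDim (Submodule R ↥M))).toNat

/-! With `ℓ` the length, `d(a, b) = ℓ a + ℓ b - 2 ℓ (a ⊓ b)` makes sense on any lattice, and
nonnegativity and separation only need `ℓ` to be strictly monotone. The triangle inequality
`d(a, c) ≤ d(a, b) + d(b, c)` is equivalent to `ℓ (a ⊓ b) + ℓ (b ⊓ c) ≤ ℓ b + ℓ (a ⊓ c)`: apply
`ℓ x + ℓ y ≤ ℓ (x ⊔ y) + ℓ (x ⊓ y)` to `x = a ⊓ b`, `y = b ⊓ c`, whose join lies below `b` and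
whose meet lies below `a ⊓ c`. For submodules this is an equality, by additivity of length
along `0 → M ⊓ N → M × N → M ⊔ N → 0`. -/

section LatticeDist

variable {α : Type*} [Lattice α] (ℓ : α → ℤ)

def latticeDist (a b : α) : ℤ := ℓ a + ℓ b - 2 * ℓ (a ⊓ b)

theorem latticeDist_comm (a b : α) : latticeDist ℓ a b = latticeDist ℓ b a := by
  rw [latticeDist, latticeDist, inf_comm]; ring

variable {ℓ}

theorem latticeDist_nonneg (hℓ : Monotone ℓ) (a b : α) : 0 ≤ latticeDist ℓ a b := by
  have := hℓ (inf_le_left : a ⊓ b ≤ a)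
  have := hℓ (inf_le_right : a ⊓ b ≤ b)
  rw [latticeDist]; omega

theorem latticeDist_eq_zero_iff (hℓ : StrictMono ℓ) {a b : α} :
    latticeDist ℓ a b = 0 ↔ a = b := by
  refine ⟨fun h ↦ ?_, fun h ↦ by rw [h, latticeDist, inf_idem]; ring⟩
  have ha := hℓ.monotone (inf_le_left : a ⊓ b ≤ a)
  have hb := hℓ.monotone (inf_le_right : a ⊓ b ≤ b)
  have ha' : ℓ (a ⊓ b) = ℓ a := by rw [latticeDist] at h; omega
  have hb' : ℓ (a ⊓ b) = ℓ b := by rw [latticeDist] at h; omega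
  have hab : a ⊓ b = a := inf_le_left.eq_of_not_lt fun hlt ↦ (hℓ hlt).ne ha'
  have hba : a ⊓ b = b := inf_le_right.eq_of_not_lt fun hlt ↦ (hℓ hlt).ne hb'
  rw [← hab, hba]

theorem latticeDist_triangle (hℓ : Monotone ℓ)
    (hsuper : ∀ a b, ℓ a + ℓ b ≤ ℓ (a ⊔ b) + ℓ (a ⊓ b)) (a b c : α) :
    latticeDist ℓ a c ≤ latticeDist ℓ a b + latticeDist ℓ b c := by
  have hsup : ℓ (a ⊓ b ⊔ b ⊓ c) ≤ ℓ b := hℓ (sup_le inf_le_right inf_le_left)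
  have hinf : ℓ (a ⊓ b ⊓ (b ⊓ c)) ≤ ℓ (a ⊓ c) :=
    hℓ (le_inf (inf_le_left.trans inf_le_left) (inf_le_right.trans inf_le_right))
  have := hsuper (a ⊓ b) (b ⊓ c)
  simp only [latticeDist]; omega

end LatticeDist

namespace Submodule

variable {R Ω : Type*} [Ring R] [AddCommGroup Ω] [Module R Ω]

theorem length_sup_add_length_inf (M N : Submodule R Ω) :
    Module.length R ↥(M ⊔ N) + Module.length R ↥(M ⊓ N) =
      Module.length R M + Module.length R N := by
  let f : ↥(M ⊓ N) →ₗ[R] ↥M × ↥N :=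
    (inclusion inf_le_left).prod (-inclusion inf_le_right)
  let g : ↥M × ↥N →ₗ[R] ↥(M ⊔ N) :=
    (inclusion le_sup_left).coprod (inclusion le_sup_right)
  have hf : Function.Injective f := fun x y h ↦
    inclusion_injective _ (congrArg Prod.fst h)
  have hg : Function.Surjective g := by
    rintro ⟨x, hx⟩
    obtain ⟨a, ha, b, hb, rfl⟩ := mem_sup.mp hx
    exact ⟨(⟨a, ha⟩, ⟨b, hb⟩), rfl⟩
  have hfg : Function.Exact f g := by
    rintro ⟨⟨a, ha⟩, ⟨b, hb⟩⟩
    suffices a + b = 0 ↔ (a ∈ M ∧ a ∈ N) ∧ -a = b by simpa [f, g, Subtype.ext_iff]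
    refine ⟨fun h ↦ ?_, fun ⟨_, h⟩ ↦ by rw [← h, add_neg_cancel]⟩
    have hba : -a = b := neg_eq_of_add_eq_zero_right h
    exact ⟨⟨ha, by simpa [← hba] using N.neg_mem hb⟩, hba⟩
  rw [add_comm, ← Module.length_eq_add_of_exact f g hf hg hfg, Module.length_prod]

end Submodule

section SubmodLength

variable {R Ω : Type*} [Ring R] [AddCommGroup Ω] [Module R Ω]

theorem submodLength_eq_toNat_length (N : Submodule R Ω) :
    submodLength N = (Module.length R N).toNat := by
  rw [submodLength, ← Module.coe_length, WithBot.unbotD_coe]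

variable [IsArtinian R Ω] [IsNoetherian R Ω]

theorem submodLength_strictMono : StrictMono (submodLength : Submodule R Ω → ℕ) := by
  intro M N h
  have := Submodule.height_strictMono h
  rw [← ENat.natCast_toNat M.height_lt_top.ne, ← ENat.natCast_toNat N.height_lt_top.ne] at this
  simpa only [submodLength_eq_toNat_length, Module.length_submodule] using
    ENat.natCast_lt_natCast.mp this

theorem submodLength_sup_add_inf (M N : Submodule R Ω) :
    submodLength (M ⊔ N) + submodLength (M ⊓ N) = submodLength M + submodLength N := by
  simp only [submodLength_eq_toNat_length]
  rw [← ENat.toNat_add Module.length_ne_top Module.length_ne_top,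
    Submodule.length_sup_add_length_inf, ENat.toNat_add Module.length_ne_top Module.length_ne_top]

end SubmodLength

/-- Over a commutative ring `R`, for an `R`-module `Ω` all of whose
submodules have finite length, `d(M,N) = λ(M) + λ(N) - 2·λ(M ⊓ N)` is a metric on the
set of submodules of `Ω`: it is nonnegative, vanishes exactly on the diagonal, is
symmetric, and satisfies the triangle inequality. -/
theorem submodule_distance_is_metric (R : Type*) [CommRing R] (Ω : Type*)
    [AddCommGroup Ω] [Module R Ω] (hfin : IsFiniteLength R Ω)
    (d : Submodule R Ω → Submodule R Ω → ℤ)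
    (hd : ∀ M N, d M N = (submodLength M : ℤ) + (submodLength N : ℤ)
      - 2 * (submodLength (M ⊓ N) : ℤ)) :
    (∀ M N, 0 ≤ d M N) ∧
    (∀ M N, d M N = 0 ↔ M = N) ∧
    (∀ M N, d M N = d N M) ∧
    (∀ M N P, d M N ≤ d M P + d P N) := by
  obtain ⟨_, _⟩ := isFiniteLength_iff_isNoetherian_isArtinian.mp hfin
  set ℓ : Submodule R Ω → ℤ := fun M ↦ submodLength M
  obtain rfl : d = latticeDist ℓ := funext₂ hd
  have hℓ : StrictMono ℓ := fun M N h ↦ Int.ofNat_lt.mpr (submodLength_strictMono h)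
  have hsuper (M N : Submodule R Ω) : ℓ M + ℓ N ≤ ℓ (M ⊔ N) + ℓ (M ⊓ N) := by
    simp only [ℓ]; exact_mod_cast (submodLength_sup_add_inf M N).ge
  exact ⟨latticeDist_nonneg hℓ.monotone, fun _ _ ↦ latticeDist_eq_zero_iff hℓ,
    latticeDist_comm ℓ, fun M N P ↦ latticeDist_triangle hℓ.monotone hsuper M P N⟩
end

section
/- Let D be a principal ideal domain, π ∈ D a nonzero element, and R = D/(π). Then for any nonzero a, b ∈ R there exists c ∈ R such that the ideal (a + cb) equals the ideal (a) + (b) in R. -/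
/-!
Lift `a, b` to `α, β ∈ D` and let `g` generate `(π, α, β)`, so `π = g π₁`, `α = g α₁`, `β = g β₁`
with `π₁, α₁, β₁` having no common prime factor. Taking `γ` to be the product of the prime
factors of `π₁` that do not divide `α₁` makes `α₁ + γ β₁` coprime to `π₁`: a prime dividing `α₁`
divides neither `γ` nor `β₁`, and any other prime factor of `π₁` divides `γ` but not `α₁`.
Hence `(π, α + γ β) = (g) = (π, α, β)` in `D`, and reducing modulo `π` gives the claim with
`c = γ mod π`.
-/

open UniqueFactorizationMonoid

theorem exists_isRelPrime_add_mul {R : Type*} [CommRing R] [IsDomain R]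
    [UniqueFactorizationMonoid R] {α β n : R} (hn : n ≠ 0)
    (h : ∀ ⦃d⦄, d ∣ α → d ∣ β → d ∣ n → IsUnit d) :
    ∃ γ, IsRelPrime n (α + γ * β) := by
  classical
  set γ := ((factors n).filter (¬ · ∣ α)).prod
  refine ⟨γ, (isRelPrime_iff_no_prime_factors hn).mpr fun p hpn hpsum hp ↦ ?_⟩
  by_cases hpα : p ∣ α
  · have hpγβ : p ∣ γ * β := (dvd_add_right hpα).mp hpsum
    rcases hp.dvd_or_dvd hpγβ with hpγ | hpβ
    · obtain ⟨q, hq, hpq⟩ := hp.exists_mem_multiset_dvd hpγ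
      obtain ⟨hqn, hqα⟩ := Multiset.mem_filter.mp hq
      exact hqα ((hp.associated_of_dvd (prime_of_factor q hqn) hpq).symm.dvd.trans hpα)
    · exact hp.not_isUnit (h hpα hpβ hpn)
  · obtain ⟨q, hqn, hpq⟩ := exists_mem_factors_of_dvd hn hp.irreducible hpn
    have hq : q ∈ (factors n).filter (¬ · ∣ α) :=
      Multiset.mem_filter.mpr ⟨hqn, fun hqα ↦ hpα (hpq.dvd.trans hqα)⟩
    have hpγ : p ∣ γ := hpq.dvd.trans (Multiset.dvd_prod hq)
    exact hpα ((dvd_add_left (dvd_mul_of_dvd_left hpγ β)).mp hpsum)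

theorem Ideal.span_le_span_singleton_iff {R : Type*} [CommSemiring R] {s : Set R} {g : R} :
    Ideal.span s ≤ Ideal.span {g} ↔ ∀ x ∈ s, g ∣ x := by
  simp only [Ideal.span_le, Set.subset_def, SetLike.mem_coe, Ideal.mem_span_singleton]

theorem exists_span_insert_add_mul_eq {D : Type*} [CommRing D] [IsDomain D]
    [IsPrincipalIdealRing D] {π : D} (hπ : π ≠ 0) (α β : D) :
    ∃ γ, Ideal.span {π, α + γ * β} = Ideal.span {π, α, β} := by
  obtain ⟨g, hg⟩ := (IsPrincipalIdealRing.principal (Ideal.span {π, α, β})).principal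
  rw [Ideal.submodule_span_eq] at hg
  have hdvd : ∀ d, Ideal.span {π, α, β} ≤ Ideal.span {d} ↔ d ∣ π ∧ d ∣ α ∧ d ∣ β := by
    simp [Ideal.span_le_span_singleton_iff]
  obtain ⟨⟨π₁, rfl⟩, ⟨α₁, rfl⟩, ⟨β₁, rfl⟩⟩ := (hdvd g).mp hg.le
  have hg0 : g ≠ 0 := left_ne_zero_of_mul hπ
  have hcommon : ∀ ⦃d⦄, d ∣ α₁ → d ∣ β₁ → d ∣ π₁ → IsUnit d := by
    intro d hα hβ hπ₁
    have : g * d ∣ g * 1 := by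
      rw [mul_one, ← Ideal.span_singleton_le_span_singleton, ← hg, hdvd]
      exact ⟨mul_dvd_mul_left g hπ₁, mul_dvd_mul_left g hα, mul_dvd_mul_left g hβ⟩
    exact isUnit_of_dvd_one ((mul_dvd_mul_iff_left hg0).mp this)
  obtain ⟨γ, hγ⟩ := exists_isRelPrime_add_mul (right_ne_zero_of_mul hπ) hcommon
  obtain ⟨x, y, hxy⟩ := hγ.isCoprime
  refine ⟨γ, hg ▸ le_antisymm ?_ ?_⟩
  · simp only [Ideal.span_le_span_singleton_iff, Set.forall_mem_insert,
      Set.mem_singleton_iff, forall_eq]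
    exact ⟨dvd_mul_right g π₁, α₁ + γ * β₁, by ring⟩
  · rw [Ideal.span_singleton_le_iff_mem, Ideal.mem_span_pair]
    exact ⟨x, y, by linear_combination g * hxy⟩

theorem Ideal.map_mk_span_insert {R : Type*} [CommRing R] (π : R) (s : Set R) :
    (Ideal.span (insert π s)).map (Ideal.Quotient.mk (Ideal.span {π})) =
      Ideal.span (Ideal.Quotient.mk _ '' s) := by
  rw [Ideal.map_span, Set.image_insert_eq, Ideal.Quotient.mk_singleton_self,
    Ideal.span_insert_zero]

theorem exists_gcd_combination_in_quotient_general (D : Type*) [CommRing D] [IsDomain D]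
    [IsPrincipalIdealRing D] (π : D) (hπ : π ≠ 0)
    (a b : D ⧸ Ideal.span ({π} : Set D)) :
    ∃ c : D ⧸ Ideal.span ({π} : Set D),
      Ideal.span {a + c * b} = Ideal.span {a} ⊔ Ideal.span {b} := by
  obtain ⟨α, rfl⟩ := Ideal.Quotient.mk_surjective a
  obtain ⟨β, rfl⟩ := Ideal.Quotient.mk_surjective b
  obtain ⟨γ, hγ⟩ := exists_span_insert_add_mul_eq hπ α β
  refine ⟨Ideal.Quotient.mk _ γ, ?_⟩
  have := congrArg (Ideal.map (Ideal.Quotient.mk (Ideal.span {π}))) hγ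
  rwa [Ideal.map_mk_span_insert, Ideal.map_mk_span_insert, Set.image_singleton,
    Set.image_pair, map_add, map_mul, Ideal.span_insert] at this

/-- Let `D` be a PID, `π ∈ D` nonzero, `R = D/(π)`. For nonzero
`a, b ∈ R` there exists `c ∈ R` with `(a + c*b) = (a) + (b)` as ideals of `R`. -/
theorem exists_gcd_combination_in_quotient (D : Type*) [CommRing D] [IsDomain D]
    [IsPrincipalIdealRing D] (π : D) (hπ : π ≠ 0)
    (a b : D ⧸ Ideal.span ({π} : Set D)) (ha : a ≠ 0) (hb : b ≠ 0) :
    ∃ c : D ⧸ Ideal.span ({π} : Set D),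
      Ideal.span {a + c * b} = Ideal.span {a} ⊔ Ideal.span {b} :=
  exists_gcd_combination_in_quotient_general D π hπ a b
end

section
/- Let R be a finite principal ideal ring, let Ω be a finite R-module, and let C be a set of submodules of Ω, each of length k, such that any two distinct elements of C have intersection of length at most k − δ (equivalently, the minimum submodule distance of C is at least 2δ). Then |C| is at most the number of submodules of length k − δ + 1 of any fixed submodule M ⊆ Ω with λ(M) = λ(Ω) − δ + 1. -/
open Module Order

section submodLength

variable {R M : Type*} [Ring R] [AddCommGroup M] [Module R M]

/-- Additivity of length on the exact sequence `0 → N ⊓ P → N × P → N ⊔ P → 0`. -/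
theorem Submodule.length_inf_add_length_sup (N P : Submodule R M) :
    length R ↥(N ⊓ P) + length R ↥(N ⊔ P) = length R N + length R P := by
  let f : ↥(N ⊓ P) →ₗ[R] ↥N × ↥P :=
    (inclusion inf_le_left).prod (-inclusion inf_le_right)
  let g : ↥N × ↥P →ₗ[R] ↥(N ⊔ P) :=
    (inclusion le_sup_left).coprod (inclusion le_sup_right)
  have hf : Function.Injective f := fun x y h => Subtype.ext (congrArg (fun z => (z.1 : M)) h)
  have hg : Function.Surjective g := by
    rintro ⟨x, hx⟩
    obtain ⟨a, ha, b, hb, rfl⟩ := mem_sup.1 hx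
    exact ⟨(⟨a, ha⟩, ⟨b, hb⟩), rfl⟩
  have hfg : Function.Exact f g := by
    rintro ⟨⟨a, ha⟩, ⟨b, hb⟩⟩
    constructor
    · intro h
      have hab : a = -b := eq_neg_of_add_eq_zero_left (congrArg Subtype.val h)
      refine ⟨⟨a, ha, by simpa [hab] using hb⟩, ?_⟩
      ext <;> simp [f, hab]
    · rintro ⟨x, hx⟩
      rw [← hx]
      ext
      simp [f, g]
  rw [← length_prod R N P, length_eq_add_of_exact f g hf hg hfg, add_comm]

theorem submodLength_eq_toNat_height (N : Submodule R M) :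
    submodLength N = (height N).toNat := by
  rw [submodLength, ← coe_length, WithBot.unbotD_coe, length_submodule]

variable [IsArtinian R M] [IsNoetherian R M]

theorem coe_submodLength (N : Submodule R M) : (submodLength N : ℕ∞) = height N := by
  rw [submodLength_eq_toNat_height, ENat.natCast_toNat N.height_lt_top.ne]

theorem submodLength_mono {N P : Submodule R M} (h : N ≤ P) :
    submodLength N ≤ submodLength P := by
  exact_mod_cast (coe_submodLength N).trans_le ((height_mono h).trans (coe_submodLength P).ge)

theorem submodLength_inf_add_submodLength_sup (N P : Submodule R M) :
    submodLength (N ⊓ P) + submodLength (N ⊔ P) = submodLength N + submodLength P := by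
  have h := N.length_inf_add_length_sup P
  simp only [length_submodule, ← coe_submodLength] at h
  exact_mod_cast h

theorem submodLength_add_submodLength_le_inf_add_top (N P : Submodule R M) :
    submodLength N + submodLength P ≤
      submodLength (N ⊓ P) + submodLength (⊤ : Submodule R M) := by
  rw [← submodLength_inf_add_submodLength_sup]
  exact Nat.add_le_add_left (submodLength_mono le_top) _

theorem exists_le_submodLength_eq {N : Submodule R M} {n : ℕ} (hn : n ≤ submodLength N) :
    ∃ P ≤ N, submodLength P = n := by
  rcases hn.eq_or_lt with rfl | hlt
  · exact ⟨N, le_rfl, rfl⟩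
  have hlt' : (n : ℕ∞) < height N := by rw [← coe_submodLength]; exact_mod_cast hlt
  obtain ⟨P, hPN, hP⟩ := (coe_lt_height_iff N.height_lt_top).1 hlt'
  exact ⟨P, hPN.le, by exact_mod_cast (coe_submodLength P).trans hP⟩

end submodLength

theorem singleton_bound_submodule_codes_general (R : Type*) [CommRing R]
    (Ω : Type*) [AddCommGroup Ω] [Module R Ω] [Finite Ω]
    (k δ : ℕ) (hδk : δ ≤ k) (C : Finset (Submodule R Ω))
    (hlen : ∀ M ∈ C, submodLength M = k)
    (hdist : ∀ M ∈ C, ∀ N ∈ C, M ≠ N → submodLength (M ⊓ N) ≤ k - δ)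
    (M : Submodule R Ω)
    (hM : submodLength M = submodLength (⊤ : Submodule R Ω) - δ + 1) :
    C.card ≤ Nat.card {N : Submodule R Ω | N ≤ M ∧ submodLength N = k - δ + 1} := by
  have := isArtinian_of_finite (R := R) (M := Ω)
  have hinf (N : Submodule R Ω) (hN : N ∈ C) : k - δ + 1 ≤ submodLength (N ⊓ M) := by
    have := submodLength_add_submodLength_le_inf_add_top N M
    have := submodLength_mono (le_top : M ≤ ⊤)
    have := hlen N hN
    omega
  choose f hf hflen using fun (N : C) => exists_le_submodLength_eq (hinf N N.2)
  let F : C → {N : Submodule R Ω | N ≤ M ∧ submodLength N = k - δ + 1} :=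
    fun N => ⟨f N, (hf N).trans inf_le_right, hflen N⟩
  have hF : Function.Injective F := by
    intro N N' hNN'
    by_contra hne
    have hfeq : f N = f N' := congrArg Subtype.val hNN'
    have hle : f N ≤ N.1 ⊓ N'.1 :=
      le_inf ((hf N).trans inf_le_left) (hfeq.trans_le ((hf N').trans inf_le_left))
    have := submodLength_mono hle
    have := hdist N N.2 N' N'.2 (Subtype.coe_injective.ne hne)
    have := hflen N
    omega
  simpa using Nat.card_le_card_of_injective F hF

/-- **Singleton-like bound.** Let `R` be a finite PIR, `Ω` a finite
`R`-module, and `C` a set of submodules of `Ω`, each of length `k`, such that any two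
distinct elements of `C` intersect in a submodule of length at most `k - δ`. Then
`|C|` is at most the number of submodules of length `k - δ + 1` of any fixed submodule
`M ⊆ Ω` of length `λ(Ω) - δ + 1`. -/
theorem singleton_bound_submodule_codes (R : Type*) [CommRing R] [Finite R]
    [IsPrincipalIdealRing R] (Ω : Type*) [AddCommGroup Ω] [Module R Ω] [Finite Ω]
    (k δ : ℕ) (hδ : 1 ≤ δ) (hδk : δ ≤ k) (C : Finset (Submodule R Ω))
    (hlen : ∀ M ∈ C, submodLength M = k)
    (hdist : ∀ M ∈ C, ∀ N ∈ C, M ≠ N → submodLength (M ⊓ N) ≤ k - δ)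
    (M : Submodule R Ω)
    (hM : submodLength M = submodLength (⊤ : Submodule R Ω) - δ + 1) :
    C.card ≤ Nat.card {N : Submodule R Ω | N ≤ M ∧ submodLength N = k - δ + 1} :=
  singleton_bound_submodule_codes_general R Ω k δ hδk C hlen hdist M hM
end

section
/- Let F be a finite field contained as a subring of a finite commutative ring R (with the same identity), and let V, W ⊆ F^n be F-subspaces. Then the intersection of the R-spans of V and W in R^n equals the R-span of V ∩ W. -/
/-!
Choose a basis `b` of `R` over `F` (any module over a field is free). A vector `x ∈ Rⁿ` lies in
the `R`-span of `V` exactly when each of its `b`-coordinate vectors `(b.coord j ∘ x) ∈ Fⁿ` lies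
in `V`: the generators `r • v` have coordinate vectors `b.coord j r • v`, and conversely `x` is
recovered as `∑ j, b j • (b.coord j ∘ x)`. Membership in both spans therefore means that every
coordinate vector lies in `V ⊓ W`.
-/

namespace Submodule

variable {F R : Type*} [CommRing F] [CommRing R] [Algebra F R] {m : Type*}

variable (R) in
def extendScalars (V : Submodule F (m → F)) : Submodule R (m → R) :=
  span R ((Algebra.linearMap F R).compLeft m '' V)

theorem restrictScalars_extendScalars [Fintype m] {κ : Type*} (b : Module.Basis κ F R)
    (V : Submodule F (m → F)) :
    (V.extendScalars R).restrictScalars F = ⨅ j, V.comap ((b.coord j).compLeft m) := by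
  apply le_antisymm
  · rw [extendScalars, ← span_smul_of_span_eq_top (span_univ (R := F) (M := R)), span_le]
    rintro _ ⟨r, -, _, ⟨v, hv, rfl⟩, rfl⟩
    simp only [SetLike.mem_coe, mem_iInf, mem_comap]
    intro j
    convert V.smul_mem (b.coord j r) hv using 1
    ext i
    simp only [LinearMap.compLeft_apply, Pi.smul_apply, Function.comp_apply,
      Algebra.linearMap_apply, smul_eq_mul]
    rw [mul_comm, ← Algebra.smul_def, map_smul, smul_eq_mul, mul_comm]
  · classical
    intro x hx
    simp only [mem_iInf, mem_comap] at hx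
    let S := Finset.univ.biUnion fun i => (b.repr (x i)).support
    have hx_eq : x = ∑ j ∈ S,
        b j • (Algebra.linearMap F R).compLeft m ((b.coord j).compLeft m x) := by
      ext i
      conv_lhs => rw [← b.linearCombination_repr (x i)]
      rw [Finsupp.linearCombination_apply_of_mem_supported F (s := S)]
      · simp [Finset.sum_apply, Algebra.smul_def, mul_comm]
      · exact Finset.subset_biUnion_of_mem (fun i => (b.repr (x i)).support) (Finset.mem_univ i)
    rw [restrictScalars_mem, hx_eq]
    exact sum_mem fun j _ => smul_mem _ _ (subset_span ⟨_, hx j, rfl⟩)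

theorem extendScalars_inf [Fintype m] [Module.Free F R] (V W : Submodule F (m → F)) :
    V.extendScalars R ⊓ W.extendScalars R = (V ⊓ W).extendScalars R := by
  apply restrictScalars_injective F
  simp only [restrictScalars_inf, restrictScalars_extendScalars (Module.Free.chooseBasis F R),
    comap_inf, iInf_inf_eq]

end Submodule

theorem span_inf_span_eq_span_inf_general (F : Type*) [Field F]
    (R : Type*) [CommRing R] (ι : F →+* R) (n : ℕ)
    (V W : Subspace F (Fin n → F)) :
    Submodule.span R ((fun v : Fin n → F => fun i => ι (v i)) '' V) ⊓
      Submodule.span R ((fun v : Fin n → F => fun i => ι (v i)) '' W) =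
    Submodule.span R ((fun v : Fin n → F => fun i => ι (v i)) '' ↑(V ⊓ W)) := by
  let _ := ι.toAlgebra
  exact Submodule.extendScalars_inf V W

/-- Let `F` be a finite field contained as a subring (via a ring
embedding `ι : F →+* R`) of a finite commutative ring `R`, and let `V, W ⊆ Fⁿ` be
`F`-subspaces. Then the intersection of the `R`-spans of `V` and `W` in `Rⁿ` equals
the `R`-span of `V ∩ W`. -/
theorem span_inf_span_eq_span_inf (F : Type*) [Field F] [Finite F]
    (R : Type*) [CommRing R] [Finite R] (ι : F →+* R) (n : ℕ)
    (V W : Subspace F (Fin n → F)) :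
    Submodule.span R ((fun v : Fin n → F => fun i => ι (v i)) '' V) ⊓
      Submodule.span R ((fun v : Fin n → F => fun i => ι (v i)) '' W) =
    Submodule.span R ((fun v : Fin n → F => fun i => ι (v i)) '' ↑(V ⊓ W)) :=
  span_inf_span_eq_span_inf_general F R ι n V W
end
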